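/- For every dimension d ≥ 1, the sequence β_{3^d−2}(T^(d)[n])/n^d converges to 1 − 3^(−d) as n → ∞; that is, the limiting density τ_{3^d−2}^(d) for d-dimensional toroidal kings graphs equals 1 − 3^(−d). -/

import Mathlib

/-! Closed neighbourhoods in `T^(d)[n]` are boxes of `3^d` vertices, so the graph is
`(3^d - 1)`-regular. In a `(3^d - 2)`-dependent set `S` every vertex therefore has a neighbour
outside `S`, while a vertex outside `S` is adjacent to at most `3^d - 1` vertices of `S`; double
counting gives `3^d |S| ≤ (3^d - 1) n^d`. Conversely, the complement of a dominating set `P` is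
`(3^d - 2)`-dependent, and the product of copies of the dominating set `{1, 4, 7, …}` of `ZMod n`
has at most `⌈n/3⌉^d` vertices, so `β ≥ n^d - ⌈n/3⌉^d`. Both bounds, divided by `n^d`, tend to
`1 - 3^(-d)`. -/

open Filter Topology

/-- The `d`-dimensional kings graph on `Fin (n 0) × ⋯ × Fin (n (d-1))`:
distinct vertices are adjacent iff their coordinates differ by at most 1. -/
def kingsGraph (d : ℕ) (n : Fin d → ℕ) :
    SimpleGraph (∀ i : Fin d, Fin (n i)) where
  Adj u v := u ≠ v ∧ ∀ i, |((v i : ℤ)) - (u i : ℤ)| ≤ 1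
  symm := by
    constructor
    rintro u v ⟨h1, h2⟩
    exact ⟨h1.symm, fun i => by rw [abs_sub_comm]; exact h2 i⟩
  loopless := by constructor; intro v h; exact h.1 rfl

/-- The `d`-dimensional toroidal kings graph on `ZMod (n 0) × ⋯ × ZMod (n (d-1))`:
distinct vertices are adjacent iff each coordinate difference is `-1`, `0` or `1`. -/
def torusGraph (d : ℕ) (n : Fin d → ℕ) :
    SimpleGraph (∀ i : Fin d, ZMod (n i)) where
  Adj u v := u ≠ v ∧ ∀ i, v i - u i = -1 ∨ v i - u i = 0 ∨ v i - u i = 1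
  symm := by
    constructor
    rintro u v ⟨h1, h2⟩
    refine ⟨h1.symm, fun i => ?_⟩
    rcases h2 i with h | h | h
    · right; right; rw [show u i - v i = -(v i - u i) by ring, h]; norm_num
    · right; left; rw [show u i - v i = -(v i - u i) by ring, h]; norm_num
    · left; rw [show u i - v i = -(v i - u i) by ring, h]
  loopless := by constructor; intro v h; exact h.1 rfl

/-- A set `S` of vertices is `k`-dependent if every vertex of `S`
has at most `k` neighbors in `S`. -/
def IsKDependent {V : Type*} (G : SimpleGraph V) (k : ℕ) (S : Set V) : Prop :=
  ∀ v ∈ S, (S ∩ G.neighborSet v).ncard ≤ k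

/-- `betaK G k` is the maximum cardinality of a `k`-dependent set in `G`. -/
noncomputable def betaK {V : Type*} (G : SimpleGraph V) (k : ℕ) : ℕ :=
  sSup {m | ∃ S : Set V, IsKDependent G k S ∧ S.ncard = m}

/-- A set `S` of vertices is half-dependent if every vertex `v ∈ S`
has at most `|N(v)|/2` neighbors in `S`. -/
def IsHalfDependent {V : Type*} (G : SimpleGraph V) (S : Set V) : Prop :=
  ∀ v ∈ S, 2 * (S ∩ G.neighborSet v).ncard ≤ (G.neighborSet v).ncard

/-- `halfNum G` is the maximum cardinality of a half-dependent set in `G`. -/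
noncomputable def halfNum {V : Type*} (G : SimpleGraph V) : ℕ :=
  sSup {m | ∃ S : Set V, IsHalfDependent G S ∧ S.ncard = m}

/-- A graph is vertex-transitive if any vertex can be mapped to any other
by a graph automorphism. -/
def IsVertexTransitive {V : Type*} (G : SimpleGraph V) : Prop :=
  ∀ u v : V, ∃ f : G ≃g G, f u = v

def IsDominating {V : Type*} (G : SimpleGraph V) (P : Set V) : Prop :=
  ∀ v ∉ P, ∃ b ∈ P, G.Adj v b

section KDependent

variable {V : Type*} {G : SimpleGraph V} {k : ℕ} {S : Set V}

theorem IsKDependent.exists_adj_notMem (hS : IsKDependent G k S) {v : V} (hv : v ∈ S)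
    (hdeg : k < (G.neighborSet v).ncard) : ∃ t ∉ S, G.Adj v t := by
  by_contra! h
  have hsub : G.neighborSet v ⊆ S := fun t ht => by_contra fun hts => h t hts ht
  have := hS v hv
  rw [Set.inter_eq_right.mpr hsub] at this
  omega

theorem ncard_le_mul_ncard_compl [Finite V] {r : ℕ} (hout : ∀ v ∈ S, ∃ t ∉ S, G.Adj v t)
    (hdeg : ∀ v, (G.neighborSet v).ncard ≤ r) : S.ncard ≤ r * Sᶜ.ncard := by
  classical
  have := Fintype.ofFinite V
  have hcount := Finset.card_mul_le_card_mul G.Adj (s := S.toFinset) (t := Sᶜ.toFinset)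
    (m := 1) (n := r) ?_ ?_
  · simpa [Set.ncard_eq_toFinset_card', mul_comm] using hcount
  · intro v hv
    obtain ⟨t, ht, hvt⟩ := hout v (Set.mem_toFinset.mp hv)
    exact Finset.one_le_card.mpr ⟨t, by simpa [Finset.bipartiteAbove] using ⟨ht, hvt⟩⟩
  · intro t _
    calc (S.toFinset.bipartiteBelow G.Adj t).card ≤ (G.neighborSet t).toFinset.card :=
          Finset.card_le_card fun v hv => by
            simp only [Finset.bipartiteBelow, Finset.mem_filter] at hv
            simpa using hv.2.symm
      _ ≤ r := by rw [← Set.ncard_eq_toFinset_card']; exact hdeg t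

theorem IsKDependent.mul_ncard_le [Finite V] (hreg : ∀ v, (G.neighborSet v).ncard = k + 1)
    (hS : IsKDependent G k S) : (k + 2) * S.ncard ≤ (k + 1) * Nat.card V := by
  have hout : ∀ v ∈ S, ∃ t ∉ S, G.Adj v t := fun v hv =>
    hS.exists_adj_notMem hv (by rw [hreg]; omega)
  have := ncard_le_mul_ncard_compl hout (fun v => (hreg v).le)
  rw [← Set.ncard_add_ncard_compl S]
  linarith

theorem IsDominating.isKDependent_compl [Finite V] {P : Set V} (hP : IsDominating G P)
    (hdeg : ∀ v, (G.neighborSet v).ncard ≤ k + 1) : IsKDependent G k Pᶜ := by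
  intro v hv
  obtain ⟨b, hbP, hvb⟩ := hP v hv
  have hsub : Pᶜ ∩ G.neighborSet v ⊆ G.neighborSet v \ {b} :=
    fun u ⟨huP, hvu⟩ => ⟨hvu, fun hub => huP (Set.mem_singleton_iff.mp hub ▸ hbP)⟩
  calc (Pᶜ ∩ G.neighborSet v).ncard ≤ (G.neighborSet v \ {b}).ncard := Set.ncard_le_ncard hsub
    _ = (G.neighborSet v).ncard - 1 := Set.ncard_sdiff_singleton_of_mem hvb
    _ ≤ k := by have := hdeg v; omega

theorem IsKDependent.ncard_le_betaK [Finite V] (hS : IsKDependent G k S) : S.ncard ≤ betaK G k :=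
  le_csSup ⟨Nat.card V, fun _ ⟨T, _, hT⟩ => hT ▸ Set.ncard_le_card T⟩ ⟨S, hS, rfl⟩

theorem exists_isKDependent_ncard_eq_betaK [Finite V] :
    ∃ S, IsKDependent G k S ∧ S.ncard = betaK G k :=
  Nat.sSup_mem (s := {m | ∃ S : Set V, IsKDependent G k S ∧ S.ncard = m})
    ⟨0, ∅, fun _ h => h.elim, Set.ncard_empty V⟩
    ⟨Nat.card V, fun _ ⟨T, _, hT⟩ => hT ▸ Set.ncard_le_card T⟩

theorem mul_betaK_le [Finite V] (hreg : ∀ v, (G.neighborSet v).ncard = k + 1) :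
    (k + 2) * betaK G k ≤ (k + 1) * Nat.card V := by
  obtain ⟨S, hS, hcard⟩ := exists_isKDependent_ncard_eq_betaK (G := G) (k := k)
  exact hcard ▸ hS.mul_ncard_le hreg

theorem IsDominating.card_le_betaK_add_ncard [Finite V] {P : Set V} (hP : IsDominating G P)
    (hdeg : ∀ v, (G.neighborSet v).ncard ≤ k + 1) : Nat.card V ≤ betaK G k + P.ncard := by
  rw [← Set.ncard_add_ncard_compl P, add_comm]
  exact Nat.add_le_add_right (hP.isKDependent_compl hdeg).ncard_le_betaK _

end KDependent

section Torus

variable {d : ℕ} {n : Fin d → ℕ}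

theorem ZMod.card_neg_one_zero_one {m : ℕ} (hm : 3 ≤ m) :
    ({-1, 0, 1} : Finset (ZMod m)).card = 3 := by
  have hne : ∀ j : ℕ, 0 < j → j < m → (j : ZMod m) ≠ 0 := fun j hj hjm h =>
    absurd (Nat.le_of_dvd hj ((ZMod.natCast_eq_zero_iff j m).mp h)) (by omega)
  have h1 : (1 : ZMod m) ≠ 0 := by exact_mod_cast hne 1 one_pos (by omega)
  have h2 : (2 : ZMod m) ≠ 0 := by exact_mod_cast hne 2 two_pos (by omega)
  refine Finset.card_eq_three.mpr ⟨-1, 0, 1, neg_ne_zero.mpr h1, fun h => h2 ?_, h1.symm, rfl⟩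
  linear_combination -h

theorem ZMod.exists_finset_card_le_forall_exists_sub_mem (m : ℕ) [NeZero m] :
    ∃ D : Finset (ZMod m), D.card ≤ (m + 2) / 3 ∧
      ∀ a, ∃ b ∈ D, b - a ∈ ({-1, 0, 1} : Set (ZMod m)) := by
  refine ⟨(Finset.range ((m + 2) / 3)).image fun j => ((3 * j + 1 : ℕ) : ZMod m),
    Finset.card_image_le.trans (Finset.card_range _).le, fun a => ?_⟩
  obtain ⟨q, r, hr, hqr, rfl⟩ : ∃ q r, r < 3 ∧ 3 * q + r < m ∧ a = ((3 * q + r : ℕ) : ZMod m) :=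
    ⟨a.val / 3, a.val % 3, Nat.mod_lt _ three_pos, by rw [Nat.div_add_mod]; exact ZMod.val_lt a,
      by rw [Nat.div_add_mod, ZMod.natCast_zmod_val]⟩
  refine ⟨((3 * q + 1 : ℕ) : ZMod m),
    Finset.mem_image_of_mem _ (Finset.mem_range.mpr (by omega)), ?_⟩
  interval_cases r <;> push_cast <;> ring_nf <;> simp

theorem torusGraph_adj_iff {u v : ∀ i, ZMod (n i)} :
    (torusGraph d n).Adj u v ↔ u ≠ v ∧ ∀ i, v i - u i ∈ ({-1, 0, 1} : Set (ZMod (n i))) :=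
  Iff.rfl

theorem torusGraph_neighborSet_ncard (hn : ∀ i, 3 ≤ n i) (v : ∀ i, ZMod (n i)) :
    ((torusGraph d n).neighborSet v).ncard = 3 ^ d - 1 := by
  have := fun i => NeZero.of_pos (three_pos.trans_le (hn i))
  have hN : (torusGraph d n).neighborSet v = Equiv.subRight v ⁻¹'
      (↑(Fintype.piFinset fun i => ({-1, 0, 1} : Finset (ZMod (n i)))) \ {0}) := by
    ext u
    simp [torusGraph_adj_iff, sub_eq_zero, ne_comm, and_comm]
  rw [hN, Set.ncard_preimage_of_injective_subset_range (Equiv.subRight v).injective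
      (by simp [(Equiv.subRight v).surjective.range_eq]),
    Set.ncard_sdiff_singleton_of_mem (by simp), Set.ncard_coe_finset, Fintype.card_piFinset]
  simp [ZMod.card_neg_one_zero_one (hn _)]

theorem torusGraph_exists_isDominating (hn : ∀ i, 3 ≤ n i) :
    ∃ P : Set (∀ i, ZMod (n i)), IsDominating (torusGraph d n) P ∧
      P.ncard ≤ ∏ i, (n i + 2) / 3 := by
  have := fun i => NeZero.of_pos (three_pos.trans_le (hn i))
  choose D hDcard hD using fun i => ZMod.exists_finset_card_le_forall_exists_sub_mem (n i)
  refine ⟨Fintype.piFinset D, fun v hv => ?_, ?_⟩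
  · choose b hbD hb using fun i => hD i (v i)
    have hbP : b ∈ (Fintype.piFinset D : Set (∀ i, ZMod (n i))) := by simpa using hbD
    exact ⟨b, hbP, fun hvb => hv (hvb ▸ hbP), hb⟩
  · rw [Set.ncard_coe_finset, Fintype.card_piFinset]
    exact Finset.prod_le_prod' fun i _ => hDcard i

theorem torusGraph_mul_betaK_le (hd : 1 ≤ d) (hn : ∀ i, 3 ≤ n i) :
    3 ^ d * betaK (torusGraph d n) (3 ^ d - 2) ≤ (3 ^ d - 1) * ∏ i, n i := by
  have := fun i => NeZero.of_pos (three_pos.trans_le (hn i))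
  have h3 : 3 ≤ 3 ^ d := Nat.le_self_pow (by omega) 3
  have hmul := mul_betaK_le (G := torusGraph d n) (k := 3 ^ d - 2)
    fun v => by rw [torusGraph_neighborSet_ncard hn]; omega
  rwa [Nat.card_pi, Fintype.prod_congr _ _ fun i => Nat.card_zmod (n i),
    Nat.sub_add_cancel (by omega : 2 ≤ 3 ^ d),
    show 3 ^ d - 2 + 1 = 3 ^ d - 1 by omega] at hmul

theorem torusGraph_prod_le_betaK_add (hn : ∀ i, 3 ≤ n i) :
    ∏ i, n i ≤ betaK (torusGraph d n) (3 ^ d - 2) + ∏ i, (n i + 2) / 3 := by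
  have := fun i => NeZero.of_pos (three_pos.trans_le (hn i))
  obtain ⟨P, hP, hPcard⟩ := torusGraph_exists_isDominating hn
  have hcard := hP.card_le_betaK_add_ncard (k := 3 ^ d - 2)
    fun v => by rw [torusGraph_neighborSet_ncard hn v]; omega
  rw [Nat.card_pi, Fintype.prod_congr _ _ fun i => Nat.card_zmod (n i)] at hcard
  exact hcard.trans (Nat.add_le_add_left hPcard _)

end Torus

theorem tendsto_one_sub_one_add_two_div_three_pow (d : ℕ) :
    Tendsto (fun n : ℕ => 1 - ((1 + 2 * (n : ℝ)⁻¹) / 3) ^ d) atTop (𝓝 (1 - ((3 : ℝ) ^ d)⁻¹)) := by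
  have h := (((tendsto_inv_atTop_zero.comp tendsto_natCast_atTop_atTop).const_mul (2 : ℝ)
    |>.const_add 1).div_const 3).pow d |>.const_sub 1
  simpa [inv_pow] using h

theorem le_torusGraph_betaK_div_pow {d n : ℕ} (hn : 3 ≤ n) :
    1 - ((1 + 2 * (n : ℝ)⁻¹) / 3) ^ d ≤
      (betaK (torusGraph d fun _ => n) (3 ^ d - 2) : ℝ) / (n : ℝ) ^ d := by
  have h := torusGraph_prod_le_betaK_add (d := d) (n := fun _ => n) fun _ => hn
  simp only [Finset.prod_const, Finset.card_univ, Fintype.card_fin] at h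
  have h' : (n : ℝ) ^ d ≤
      betaK (torusGraph d fun _ => n) (3 ^ d - 2) + (((n + 2) / 3 : ℕ) : ℝ) ^ d := by
    exact_mod_cast h
  have hceil : (((n + 2) / 3 : ℕ) : ℝ) ^ d ≤ (((n : ℝ) + 2) / 3) ^ d :=
    pow_le_pow_left₀ (by positivity) (by exact_mod_cast Nat.cast_div_le) d
  have hscale : ((1 + 2 * (n : ℝ)⁻¹) / 3) ^ d * (n : ℝ) ^ d = (((n : ℝ) + 2) / 3) ^ d := by
    rw [← mul_pow]; field_simp
  rw [le_div_iff₀ (by positivity), sub_mul, one_mul, hscale]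
  linarith

theorem torusGraph_betaK_div_pow_le {d n : ℕ} (hd : 1 ≤ d) (hn : 3 ≤ n) :
    (betaK (torusGraph d fun _ => n) (3 ^ d - 2) : ℝ) / (n : ℝ) ^ d ≤ 1 - ((3 : ℝ) ^ d)⁻¹ := by
  have h := torusGraph_mul_betaK_le (n := fun _ => n) hd fun _ => hn
  simp only [Finset.prod_const, Finset.card_univ, Fintype.card_fin] at h
  have h' : (3 : ℝ) ^ d * betaK (torusGraph d fun _ => n) (3 ^ d - 2) ≤
      (3 ^ d - 1) * n ^ d := by
    have := Nat.cast_le (α := ℝ).mpr h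
    push_cast [Nat.cast_sub (Nat.one_le_pow d 3 three_pos)] at this
    exact this
  have hscale : (1 - ((3 : ℝ) ^ d)⁻¹) * n ^ d = (3 ^ d - 1) * n ^ d / 3 ^ d := by field_simp
  rw [div_le_iff₀ (by positivity), hscale, le_div_iff₀' (by positivity)]
  exact h'

/-- τ_{3^d−2}^(d) = 1 − 3^(−d). -/
theorem stmt_11 (d : ℕ) (hd : 1 ≤ d) :
    Filter.Tendsto
      (fun n : ℕ => (betaK (torusGraph d (fun _ => n)) (3 ^ d - 2) : ℝ) / (n : ℝ) ^ d)
      Filter.atTop (nhds (1 - ((3 : ℝ) ^ d)⁻¹)) :=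
  tendsto_of_tendsto_of_tendsto_of_le_of_le' (tendsto_one_sub_one_add_two_div_three_pow d)
    tendsto_const_nhds
    (eventually_atTop.mpr ⟨3, fun _ hn => le_torusGraph_betaK_div_pow hn⟩)
    (eventually_atTop.mpr ⟨3, fun _ hn => torusGraph_betaK_div_pow_le hd hn⟩)
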